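/- If a semimetric space X is sequentially b-compact (every sequence (x_i) with d(x_j,x_i) < ∞ for all i < j has a subsequence converging with respect to the forward topology), then X is b-complete (every backward Cauchy sequence f-converges to a point of X). -/

import Mathlib

open Set Filter
open scoped ENNReal NNReal

structure SMetric (X : Type*) where
  d : X → X → ℝ≥0∞
  d_self : ∀ x, d x x = 0
  d_eq_zero : ∀ x y, d x y = 0 → x = y
  d_triangle : ∀ x y z, d x z ≤ d x y + d y z

namespace SMetric

variable {X : Type*}

def fTop (M : SMetric X) : TopologicalSpace X :=
  TopologicalSpace.generateFrom {U | ∃ (x : X) (r : ℝ≥0∞), U = {y | M.d x y < r}}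

def bTop (M : SMetric X) : TopologicalSpace X :=
  TopologicalSpace.generateFrom {U | ∃ (x : X) (r : ℝ≥0∞), U = {y | M.d y x < r}}

/-- The sequence `u` b-converges to `x`: convergence w.r.t. the backward topology,
equivalently `d (u i) x → 0`. -/
def BConv (M : SMetric X) (u : ℕ → X) (x : X) : Prop :=
  ∀ ε : ℝ≥0∞, 0 < ε → ∀ᶠ k in Filter.atTop, M.d (u k) x < ε

/-- The sequence `u` f-converges to `x`: convergence w.r.t. the forward topology,
equivalently `d x (u i) → 0`. -/
def FConv (M : SMetric X) (u : ℕ → X) (x : X) : Prop :=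
  ∀ ε : ℝ≥0∞, 0 < ε → ∀ᶠ k in Filter.atTop, M.d x (u k) < ε

def FCauchy (M : SMetric X) (u : ℕ → X) : Prop :=
  ∀ ε : ℝ≥0∞, 0 < ε → ∃ N : ℕ, ∀ m n : ℕ, N ≤ n → n ≤ m → M.d (u n) (u m) < ε

def BCauchy (M : SMetric X) (u : ℕ → X) : Prop :=
  ∀ ε : ℝ≥0∞, 0 < ε → ∃ N : ℕ, ∀ m n : ℕ, N ≤ n → n ≤ m → M.d (u m) (u n) < ε

def SeqFCompact (M : SMetric X) : Prop :=
  ∀ u : ℕ → X, (∀ i j : ℕ, i < j → M.d (u i) (u j) < ⊤) →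
    ∃ φ : ℕ → ℕ, StrictMono φ ∧ ∃ x : X, M.BConv (u ∘ φ) x

def SeqBCompact (M : SMetric X) : Prop :=
  ∀ u : ℕ → X, (∀ i j : ℕ, i < j → M.d (u j) (u i) < ⊤) →
    ∃ φ : ℕ → ℕ, StrictMono φ ∧ ∃ x : X, M.FConv (u ∘ φ) x

def FComplete (M : SMetric X) : Prop :=
  ∀ u : ℕ → X, M.FCauchy u → ∃ x : X, M.BConv u x

def BComplete (M : SMetric X) : Prop :=
  ∀ u : ℕ → X, M.BCauchy u → ∃ x : X, M.FConv u x

end SMetric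

namespace SMetric

variable {X : Type*} {M : SMetric X} {u : ℕ → X}

theorem BCauchy.exists_tail_d_lt_top (hu : M.BCauchy u) :
    ∃ N, ∀ i j : ℕ, i < j → M.d (u (N + j)) (u (N + i)) < ⊤ := by
  obtain ⟨N, hN⟩ := hu 1 one_pos
  exact ⟨N, fun i j hij => (hN _ _ le_self_add (by omega)).trans ENNReal.one_lt_top⟩

theorem BCauchy.fConv_of_fConv_comp (hu : M.BCauchy u) {φ : ℕ → ℕ} (hφ : StrictMono φ) {x : X}
    (hx : M.FConv (u ∘ φ) x) : M.FConv u x := by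
  intro ε hε
  have hε₂ : 0 < ε / 2 := ENNReal.half_pos hε.ne'
  obtain ⟨N, hN⟩ := hu (ε / 2) hε₂
  obtain ⟨K, hK⟩ := (hx (ε / 2) hε₂).exists_forall_of_atTop
  refine eventually_atTop.2 ⟨N, fun k hk => ?_⟩
  set m := max K k
  have hkm : k ≤ φ m := (le_max_right K k).trans hφ.le_apply
  calc M.d x (u k) ≤ M.d x (u (φ m)) + M.d (u (φ m)) (u k) := M.d_triangle _ _ _
    _ < ε / 2 + ε / 2 := ENNReal.add_lt_add (hK m (le_max_left K k)) (hN _ _ hk hkm)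
    _ = ε := ENNReal.add_halves ε

end SMetric

/-- If a semimetric space is sequentially b-compact, then it is b-complete. -/
theorem stmt_1 {X : Type*} (M : SMetric X) (h : M.SeqBCompact) : M.BComplete := by
  intro u hu
  obtain ⟨N, hN⟩ := hu.exists_tail_d_lt_top
  obtain ⟨φ, hφ, x, hx⟩ := h (fun k => u (N + k)) hN
  exact ⟨x, hu.fConv_of_fConv_comp (φ := fun k => N + φ k)
    (fun i j hij => Nat.add_lt_add_left (hφ hij) N) hx⟩
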